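/- There exists a nice pseudo-distribution p ∈ Δ_{≤ℓ}([n]) maximizing val(p): i.e., there exist E ≥ 0 and i ≥ t+1 such that v_k p_k = E for all k ≤ t+1; p_k = min{1, E/v_k} for all k ≤ i; p_{i+1} < min{1, E/v_{i+1}} if i+1 ≤ n; and p_k = 0 for all k ≥ i+2. -/
import Mathlib


open Finset

noncomputable def val (n t : ℕ) (v p : Fin n → ℝ) : ℝ :=
  sInf {x : ℝ | ∃ B : Finset (Fin n), B.card = t ∧ x = ∑ i ∈ univ \ B, v i * p i}

lemma filter_lt_succ_eq {n : ℕ} (m : ℕ) (hm : m < n) :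
    (univ : Finset (Fin n)).filter (fun k : Fin n => (k : ℕ) < m + 1) =
      insert ⟨m, hm⟩ ((univ : Finset (Fin n)).filter (fun k : Fin n => (k : ℕ) < m)) := by
  ext k
  simp only [mem_filter, mem_univ, true_and, mem_insert, Fin.ext_iff]
  omega

lemma card_filter_lt {n : ℕ} (m : ℕ) (hm : m ≤ n) :
    ((univ : Finset (Fin n)).filter (fun k : Fin n => (k : ℕ) < m)).card = m := by
  induction m with
  | zero => simp
  | succ m ih =>
    rw [filter_lt_succ_eq m (by omega), card_insert_of_notMem (by simp), ih (by omega)]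

lemma val_le {n t : ℕ} (v q : Fin n → ℝ) (B : Finset (Fin n)) (hB : B.card = t) :
    val n t v q ≤ ∑ i ∈ univ \ B, v i * q i := by
  apply csInf_le
  · apply Set.Finite.bddBelow
    apply Set.Finite.subset (Set.finite_range fun B : Finset (Fin n) => ∑ i ∈ univ \ B, v i * q i)
    rintro x ⟨B, -, rfl⟩
    exact ⟨B, rfl⟩
  · exact ⟨B, hB, rfl⟩

lemma le_val {n t : ℕ} (hn : t ≤ n) (v q : Fin n → ℝ) (c : ℝ)
    (h : ∀ B : Finset (Fin n), B.card = t → c ≤ ∑ i ∈ univ \ B, v i * q i) :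
    c ≤ val n t v q := by
  apply le_csInf
  · obtain ⟨B, -, hB⟩ := Finset.exists_subset_card_eq (s := (univ : Finset (Fin n))) (n := t) (by simpa)
    exact ⟨_, B, hB, rfl⟩
  · rintro x ⟨B, hB, rfl⟩
    exact h B hB

lemma exists_top {n : ℕ} (t : ℕ) (ht : t ≤ n) (w : Fin n → ℝ) :
    ∃ B : Finset (Fin n), B.card = t ∧ ∀ i ∈ B, ∀ j ∈ univ \ B, w j ≤ w i := by
  induction t with
  | zero => exact ⟨∅, rfl, by simp⟩
  | succ t ih =>
    obtain ⟨B, hB, hprop⟩ := ih (by omega)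
    have hne : (univ \ B).Nonempty := by
      rw [← Finset.card_pos, card_sdiff_of_subset (subset_univ B), card_univ, Fintype.card_fin, hB]
      omega
    obtain ⟨j, hj, hjmax⟩ := Finset.exists_max_image (univ \ B) w hne
    refine ⟨insert j B, ?_, ?_⟩
    · rw [card_insert_of_notMem (by simp only [mem_sdiff, mem_univ, true_and] at hj; exact hj), hB]
    · intro i hi k hk
      have hk' : k ∈ univ \ B := by
        simp only [mem_sdiff, mem_univ, true_and] at hk ⊢
        exact fun h => hk (mem_insert_of_mem h)
      rcases mem_insert.1 hi with rfl | hiB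
      · exact hjmax k hk'
      · exact hprop i hiB k hk'

/-- There exists a *nice* pseudo-distribution `p ∈ Δ_{≤ℓ}([n])` maximizing
`val p`: for some `E ≥ 0` and `i ≥ t+1`, `v k * p k = E` for all `k ≤ t+1`,
`p k = min 1 (E / v k)` for all `k ≤ i`, `p (i+1) < min 1 (E / v (i+1))` when
`i + 1 ≤ n`, and `p k = 0` for all `k ≥ i+2`. -/
theorem stmt_15 (n t ℓ : ℕ) (v : Fin n → ℝ)
    (hmono : ∀ i j : Fin n, i ≤ j → v j ≤ v i) (hpos : ∀ i, 0 < v i)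
    (ht1 : 1 ≤ t) (ht : t < n) (hℓ1 : 1 ≤ ℓ) (hℓ : ℓ < n) :
    ∃ p : Fin n → ℝ, (∀ i, 0 ≤ p i ∧ p i ≤ 1) ∧ (∑ i, p i) ≤ ℓ ∧
      (∀ q : Fin n → ℝ, (∀ i, 0 ≤ q i ∧ q i ≤ 1) → (∑ i, q i) ≤ ℓ →
        val n t v q ≤ val n t v p) ∧
      (∃ E : ℝ, 0 ≤ E ∧ ∃ i : ℕ, t + 1 ≤ i ∧ i ≤ n ∧
        (∀ k : Fin n, (k : ℕ) ≤ t → v k * p k = E) ∧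
        (∀ k : Fin n, (k : ℕ) < i → p k = min 1 (E / v k)) ∧
        (∀ h : i < n, p ⟨i, h⟩ < min 1 (E / v ⟨i, h⟩)) ∧
        (∀ k : Fin n, i + 1 ≤ (k : ℕ) → p k = 0)) := by
  classical
  have h0n : 0 < n := lt_of_le_of_lt (Nat.zero_le t) ht
  set v0 : ℝ := v ⟨0, h0n⟩ with hv0def
  set vt : ℝ := v ⟨t, ht⟩ with hvtdef
  have hvle_v0 : ∀ k : Fin n, v k ≤ v0 := fun k => hmono ⟨0, h0n⟩ k (by simp [Fin.le_def])
  have hvt_le : ∀ k : Fin n, (k : ℕ) ≤ t → vt ≤ v k := fun k hk => hmono k ⟨t, ht⟩ hk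
  have hvt_ge : ∀ k : Fin n, t ≤ (k : ℕ) → v k ≤ vt := fun k hk => hmono ⟨t, ht⟩ k hk
  -- the joint objective
  set Φ : ℝ × (Fin n → ℝ) → ℝ :=
    fun x => (∑ k, min (v k * x.2 k) x.1) - t * x.1 with hΦdef
  set Q : Set (Fin n → ℝ) := {q | (∀ i, 0 ≤ q i ∧ q i ≤ 1) ∧ (∑ i, q i) ≤ (ℓ : ℝ)} with hQdef
  set K : Set (ℝ × (Fin n → ℝ)) := (Set.Icc 0 v0) ×ˢ Q with hKdef
  have hQc : IsCompact Q := by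
    have h1 : IsCompact (Set.pi Set.univ fun _ : Fin n => Set.Icc (0:ℝ) 1) :=
      isCompact_univ_pi fun _ => isCompact_Icc
    have h2 : Q = (Set.pi Set.univ fun _ : Fin n => Set.Icc (0:ℝ) 1) ∩
        {q : Fin n → ℝ | (∑ i, q i) ≤ (ℓ : ℝ)} := by
      ext q
      simp only [hQdef, Set.mem_setOf_eq, Set.mem_inter_iff, Set.mem_pi, Set.mem_univ,
        Set.mem_Icc, forall_const, true_implies]
    rw [h2]
    exact h1.inter_right (isClosed_le (by fun_prop) continuous_const)
  have hKc : IsCompact K := isCompact_Icc.prod hQc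
  have hKne : K.Nonempty := by
    refine ⟨(0, fun _ => 0), ?_, ?_, ?_⟩
    · exact Set.mem_Icc.2 ⟨le_refl 0, (hpos _).le⟩
    · intro i; exact ⟨le_refl 0, zero_le_one⟩
    · simp
  have hΦc : Continuous Φ := by
    apply Continuous.sub
    · apply continuous_finset_sum
      intro k _
      exact (continuous_const.mul ((continuous_apply k).comp continuous_snd)).min continuous_fst
    · exact continuous_const.mul continuous_fst
  obtain ⟨⟨θs, q0⟩, hKmem, hKmax'⟩ := hKc.exists_isMaxOn hKne hΦc.continuousOn
  have hKmax : ∀ x ∈ K, Φ x ≤ Φ (θs, q0) := fun x hx => hKmax' hx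
  obtain ⟨hθsmem, hq0mem⟩ := Set.mem_prod.1 hKmem
  obtain ⟨hq01, hq0sum⟩ := hq0mem
  set M : ℝ := Φ (θs, q0) with hMdef
  -- Step 1: every feasible q has val q ≤ M
  have hΦval : ∀ (θ : ℝ) (qq : Fin n → ℝ),
      Φ (θ, qq) = (∑ k, min (v k * qq k) θ) - t * θ := fun _ _ => rfl
  have key1 : ∀ q : Fin n → ℝ, (∀ i, 0 ≤ q i ∧ q i ≤ 1) → (∑ i, q i) ≤ (ℓ : ℝ) →
      val n t v q ≤ M := by
    intro q hq hqsum
    obtain ⟨B, hBcard, hBtop⟩ := exists_top t ht.le (fun k => v k * q k)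
    have hBne : B.Nonempty := Finset.card_pos.1 (by rw [hBcard]; omega)
    set w : Fin n → ℝ := fun k => v k * q k with hwdef
    set θq : ℝ := B.inf' hBne w with hθqdef
    obtain ⟨i0, hi0B, hi0⟩ := Finset.exists_mem_eq_inf' hBne w
    have hθq0 : 0 ≤ θq := by
      rw [hθqdef, hi0]; exact mul_nonneg (hpos i0).le (hq i0).1
    have hθqv0 : θq ≤ v0 := by
      rw [hθqdef, hi0]
      calc w i0 ≤ v i0 := mul_le_of_le_one_right (hpos i0).le (hq i0).2
        _ ≤ v0 := hvle_v0 i0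
    have hmem : (θq, q) ∈ K := ⟨Set.mem_Icc.2 ⟨hθq0, hθqv0⟩, hq, hqsum⟩
    have h1 : ∀ k ∈ B, min (w k) θq = θq := fun k hk => min_eq_right (Finset.inf'_le w hk)
    have h2 : ∀ k ∈ univ \ B, min (w k) θq = w k := fun k hk =>
      min_eq_left (by rw [hθqdef, hi0]; exact hBtop i0 hi0B k hk)
    have hsum : ∑ k, min (w k) θq = (∑ k ∈ univ \ B, w k) + t * θq := by
      rw [← Finset.sum_sdiff (subset_univ B), Finset.sum_congr rfl h2,
        Finset.sum_congr rfl h1, Finset.sum_const, hBcard, nsmul_eq_mul]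
    calc val n t v q ≤ ∑ k ∈ univ \ B, w k := val_le v q B hBcard
      _ = Φ (θq, q) := by rw [hΦval]; linarith
      _ ≤ M := hKmax _ hmem
  -- clamp θs to vt
  have hθs0 : 0 ≤ θs := hθsmem.1
  set θ : ℝ := min θs vt with hθdef
  have hθ0 : 0 ≤ θ := le_min hθs0 (hpos _).le
  have hθvt : θ ≤ vt := min_le_right _ _
  have hθv0 : θ ≤ v0 := hθvt.trans (hvle_v0 ⟨t, ht⟩)
  have hclamp : M ≤ Φ (θ, q0) := by
    rcases le_total θs vt with h | h
    · rw [hθdef, min_eq_left h]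
    · rw [hθdef, min_eq_right h]
      have per : ∀ k : Fin n, min (v k * q0 k) θs ≤
          min (v k * q0 k) vt + (if (k:ℕ) < t then θs - vt else 0) := by
        intro k
        by_cases hk : (k:ℕ) < t
        · rw [if_pos hk]
          rcases le_total (v k * q0 k) vt with hw | hw
          · rw [min_eq_left (hw.trans h), min_eq_left hw]; linarith
          · rw [min_eq_right hw]
            have := min_le_right (v k * q0 k) θs
            linarith
        · rw [if_neg hk]
          have hwle : v k * q0 k ≤ vt :=
            le_trans (mul_le_of_le_one_right (hpos k).le (hq01 k).2)
              (hvt_ge k (le_of_not_gt hk))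
          rw [min_eq_left hwle, min_eq_left (hwle.trans h)]
          linarith
      have hsum := Finset.sum_le_sum (fun k (_ : k ∈ univ) => per k)
      rw [Finset.sum_add_distrib] at hsum
      have hite : ∑ k : Fin n, (if (k:ℕ) < t then θs - vt else 0) = t * (θs - vt) := by
        rw [Finset.sum_ite, Finset.sum_const, Finset.sum_const, card_filter_lt t ht.le,
          smul_zero, add_zero, nsmul_eq_mul]
      rw [hMdef, hΦval, hΦval]
      rw [hite] at hsum
      have htvt : (t:ℝ) * vt ≤ (t:ℝ) * θs := by
        apply mul_le_mul_of_nonneg_left h (by positivity)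
      linarith
  -- greedy construction at level θ
  set c : Fin n → ℝ := fun k => min 1 (θ / v k) with hcdef
  have hc0 : ∀ k, 0 ≤ c k := fun k => le_min zero_le_one (div_nonneg hθ0 (hpos k).le)
  have hc1 : ∀ k, c k ≤ 1 := fun k => min_le_left _ _
  have hvc : ∀ k, v k * c k = min (v k) θ := by
    intro k
    rw [hcdef]
    simp only
    rw [mul_min_of_nonneg _ _ (hpos k).le, mul_one, mul_div_cancel₀ _ (hpos k).ne']
  have hvcθ : ∀ k, v k * c k ≤ θ := fun k => (hvc k) ▸ min_le_right _ _
  have hvcE : ∀ k : Fin n, (k:ℕ) ≤ t → v k * c k = θ := by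
    intro k hk
    rw [hvc k]
    exact min_eq_right (hθvt.trans (hvt_le k hk))
  set S : ℕ → ℝ := fun m => ∑ k ∈ univ.filter (fun k : Fin n => (k:ℕ) < m), c k with hSdef
  set P : ℕ → Prop := fun m => S m ≤ (ℓ:ℝ) with hPdef
  have hP0 : P 0 := by
    rw [hPdef]
    simp only [hSdef]
    have : (univ.filter (fun k : Fin n => (k:ℕ) < 0)) = ∅ := by
      apply Finset.filter_false_of_mem; intro k _; omega
    rw [this, Finset.sum_empty]
    positivity
  set s : ℕ := Nat.findGreatest P n with hsdef
  have hsn : s ≤ n := Nat.findGreatest_le n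
  have hPs : P s := Nat.findGreatest_spec (Nat.zero_le n) hP0
  have hSsucc : ∀ m (hm : m < n), S (m+1) = S m + c ⟨m, hm⟩ := by
    intro m hm
    rw [hSdef]
    simp only
    rw [filter_lt_succ_eq m hm, Finset.sum_insert (by simp)]
    ring
  have hnP : ∀ m, s < m → m ≤ n → ¬ P m := fun m h1 h2 => Nat.findGreatest_is_greatest h1 h2
  set r : ℝ := (ℓ:ℝ) - S s with hrdef
  have hr0 : 0 ≤ r := by
    rw [hrdef]
    have := hPs
    rw [hPdef] at this
    linarith
  have hrcs : ∀ h : s < n, r < c ⟨s, h⟩ := by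
    intro h
    have h1 := hnP (s+1) (Nat.lt_succ_self s) h
    rw [hPdef] at h1
    push_neg at h1
    have h2 := hSsucc s h
    rw [hrdef]
    linarith
  set p : Fin n → ℝ := fun k => if (k:ℕ) < s then c k else if (k:ℕ) = s then r else 0 with hpdef
  have hp01 : ∀ k, 0 ≤ p k ∧ p k ≤ 1 := by
    intro k
    rw [hpdef]
    simp only
    by_cases h1 : (k:ℕ) < s
    · rw [if_pos h1]; exact ⟨hc0 k, hc1 k⟩
    · rw [if_neg h1]
      by_cases h2 : (k:ℕ) = s
      · rw [if_pos h2]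
        have hsln : s < n := h2 ▸ k.isLt
        have := hrcs hsln
        have := hc1 ⟨s, hsln⟩
        exact ⟨hr0, by linarith⟩
      · rw [if_neg h2]; exact ⟨le_refl 0, zero_le_one⟩
  have hvpθ : ∀ k, v k * p k ≤ θ := by
    intro k
    rw [hpdef]
    simp only
    by_cases h1 : (k:ℕ) < s
    · rw [if_pos h1]; exact hvcθ k
    · rw [if_neg h1]
      by_cases h2 : (k:ℕ) = s
      · rw [if_pos h2]
        have hsln : s < n := h2 ▸ k.isLt
        have hkeq : k = ⟨s, hsln⟩ := Fin.ext h2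
        calc v k * r ≤ v k * c ⟨s, hsln⟩ := by
              apply mul_le_mul_of_nonneg_left (hrcs hsln).le (hpos k).le
          _ = v ⟨s, hsln⟩ * c ⟨s, hsln⟩ := by rw [hkeq]
          _ ≤ θ := hvcθ _
      · rw [if_neg h2, mul_zero]; exact hθ0
  -- sum splitting for p
  have hsum_p : ∀ g : Fin n → ℝ, (∑ k, g k * p k) =
      (∑ k ∈ univ.filter (fun k : Fin n => (k:ℕ) < s), g k * c k) +
      (if h : s < n then g ⟨s, h⟩ * r else 0) := by
    intro g
    rw [← Finset.sum_filter_add_sum_filter_not univ (fun k : Fin n => (k:ℕ) < s)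
      (fun k => g k * p k)]
    congr 1
    · refine Finset.sum_congr rfl fun k hk => ?_
      rw [Finset.mem_filter] at hk
      rw [hpdef]
      simp only
      rw [if_pos hk.2]
    · by_cases h : s < n
      · rw [dif_pos h]
        have hins : univ.filter (fun k : Fin n => ¬ (k:ℕ) < s) =
            insert ⟨s, h⟩ (univ.filter (fun k : Fin n => s + 1 ≤ (k:ℕ))) := by
          ext k
          simp only [Finset.mem_filter, Finset.mem_univ, true_and, Finset.mem_insert,
            Fin.ext_iff]
          omega
        rw [hins, Finset.sum_insert (by simp)]
        have h1 : p ⟨s, h⟩ = r := by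
          rw [hpdef]; simp
        have h2 : ∀ k ∈ univ.filter (fun k : Fin n => s + 1 ≤ (k:ℕ)), g k * p k = 0 := by
          intro k hk
          rw [Finset.mem_filter] at hk
          rw [hpdef]
          simp only
          rw [if_neg (by omega), if_neg (by omega), mul_zero]
        rw [h1, Finset.sum_congr rfl h2, Finset.sum_const_zero, add_zero]
      · rw [dif_neg h]
        apply Finset.sum_eq_zero
        intro k hk
        rw [Finset.mem_filter] at hk
        exact absurd (lt_of_lt_of_le k.isLt (le_of_not_gt h)) hk.2
  have hsum_p_le : (∑ k, p k) ≤ (ℓ:ℝ) := by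
    have h1 := hsum_p (fun _ => 1)
    simp only [one_mul] at h1
    rw [h1]
    by_cases h : s < n
    · rw [dif_pos h]
      show S s + r ≤ (ℓ:ℝ)
      rw [hrdef]
      ring_nf
      rfl
    · rw [dif_neg h, add_zero]
      show S s ≤ (ℓ:ℝ)
      exact hPs
  set G : ℝ := ∑ k, v k * p k with hGdef
  have hclaim : Φ (θ, q0) ≤ G - t * θ := by
    rw [hΦval]
    have hG : (∑ k : Fin n, min (v k * q0 k) θ) ≤ G := by
      rw [hGdef, hsum_p v]
      by_cases hcase : s < n
      · rw [dif_pos hcase]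
        set vs : ℝ := v ⟨s, hcase⟩ with hvsdef
        have hvs0 : 0 ≤ vs := (hpos _).le
        have per : ∀ k : Fin n, min (v k * q0 k) θ ≤
            vs * q0 k + (if (k:ℕ) < s then v k * c k - vs * c k else 0) := by
          intro k
          by_cases hk : (k:ℕ) < s
          · rw [if_pos hk]
            have hvk_ge : vs ≤ v k := hmono k ⟨s, hcase⟩ (by simp [Fin.le_def]; omega)
            rcases le_or_gt (q0 k) (c k) with hq | hq
            · have h1 : v k * q0 k ≤ v k * c k := mul_le_mul_of_nonneg_left hq (hpos k).le
              have h2 := min_le_left (v k * q0 k) θ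
              nlinarith [(hq01 k).1]
            · have hck1 : c k < 1 := lt_of_lt_of_le hq (hq01 k).2
              have hdlt : θ / v k < 1 := by
                by_contra hcon
                push_neg at hcon
                have : c k = 1 := by
                  rw [hcdef]; simp only; exact min_eq_left hcon
                linarith
              have hθvk : θ ≤ v k := ((div_lt_one (hpos k)).1 hdlt).le
              have hvkck : v k * c k = θ := by
                rw [hvc k]; exact min_eq_right hθvk
              have h4 := min_le_right (v k * q0 k) θ
              have h5 : vs * c k ≤ vs * q0 k := mul_le_mul_of_nonneg_left hq.le hvs0
              linarith
          · rw [if_neg hk, add_zero]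
            have hvk_le : v k ≤ vs := hmono ⟨s, hcase⟩ k (by simp [Fin.le_def]; omega)
            calc min (v k * q0 k) θ ≤ v k * q0 k := min_le_left _ _
              _ ≤ vs * q0 k := mul_le_mul_of_nonneg_right hvk_le (hq01 k).1
        have hsum := Finset.sum_le_sum fun k (_ : k ∈ univ) => per k
        rw [Finset.sum_add_distrib] at hsum
        have h6 : ∑ k : Fin n, vs * q0 k = vs * ∑ k, q0 k := by rw [Finset.mul_sum]
        have h7 : ∑ k : Fin n, (if (k:ℕ) < s then v k * c k - vs * c k else 0) =
            (∑ k ∈ univ.filter (fun k : Fin n => (k:ℕ) < s), v k * c k) - vs * S s := by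
          rw [Finset.sum_ite, Finset.sum_const_zero, add_zero, Finset.sum_sub_distrib,
            ← Finset.mul_sum]
        have h8 : vs * (∑ k, q0 k) ≤ vs * (ℓ:ℝ) := mul_le_mul_of_nonneg_left hq0sum hvs0
        have h9 : vs * r = vs * (ℓ:ℝ) - vs * S s := by rw [hrdef]; ring
        rw [h6, h7] at hsum
        linarith
      · rw [dif_neg hcase, add_zero]
        have hall : univ.filter (fun k : Fin n => (k:ℕ) < s) = univ := by
          apply Finset.filter_true_of_mem
          intro k _
          exact lt_of_lt_of_le k.isLt (le_of_not_gt hcase)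
        rw [hall]
        apply Finset.sum_le_sum
        intro k _
        rw [hvc k]
        exact min_le_min (mul_le_of_le_one_right (hpos k).le (hq01 k).2) (le_refl θ)
    linarith
  have hvalp : M ≤ val n t v p := by
    refine le_trans (le_trans hclamp hclaim) (le_val ht.le v p _ ?_)
    intro B hB
    have hsd : ∑ i ∈ univ \ B, v i * p i + ∑ i ∈ B, v i * p i = G :=
      Finset.sum_sdiff (Finset.subset_univ B)
    have hBsum : ∑ i ∈ B, v i * p i ≤ t * θ := by
      calc ∑ i ∈ B, v i * p i ≤ ∑ _i ∈ B, θ := Finset.sum_le_sum fun i _ => hvpθ i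
        _ = t * θ := by rw [Finset.sum_const, hB, nsmul_eq_mul]
    linarith
  -- the cutoff is at least t+1
  have hck : ∀ k : Fin n, (k:ℕ) ≤ t → c k = θ / v k := by
    intro k hk
    rw [hcdef]
    simp only
    exact min_eq_right (by rw [div_le_one (hpos k)]; exact hθvt.trans (hvt_le k hk))
  have hst : t + 1 ≤ s := by
    by_contra hcon
    push_neg at hcon
    have hst' : s ≤ t := by omega
    have hsln : s < n := lt_of_le_of_lt hst' ht
    set vs : ℝ := v ⟨s, hsln⟩ with hvsdef
    have hθpos : 0 < θ := by
      rcases lt_or_eq_of_le hθ0 with h | h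
      · exact h
      · exfalso
        have hc_zero : ∀ k, c k = 0 := by
          intro k
          rw [hcdef]
          simp only
          rw [← h, zero_div]
          simp
        apply hnP (s+1) (Nat.lt_succ_self s) hsln
        show S (s+1) ≤ (ℓ:ℝ)
        have hz : S (s+1) = 0 := Finset.sum_eq_zero fun k _ => hc_zero k
        rw [hz]
        positivity
    set D : ℝ := ∑ k ∈ univ.filter (fun k : Fin n => (k:ℕ) < t+1), 1 / v k with hDdef
    have hD0 : 0 < D := by
      rw [hDdef]
      apply Finset.sum_pos
      · intro k _; exact one_div_pos.2 (hpos k)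
      · exact ⟨⟨0, h0n⟩, by simp⟩
    have hl0 : (0:ℝ) < (ℓ:ℝ) := by exact_mod_cast Nat.lt_of_lt_of_le Nat.zero_lt_one hℓ1
    set θpp : ℝ := min vt ((ℓ:ℝ) / D) with hθppdef
    have hθpp0 : 0 < θpp := lt_min (hpos _) (div_pos hl0 hD0)
    set q2 : Fin n → ℝ := fun k => if (k:ℕ) < t+1 then θpp / v k else 0 with hq2def
    have hq2mem : (θpp, q2) ∈ K := by
      refine ⟨Set.mem_Icc.2 ⟨hθpp0.le, le_trans (min_le_left _ _) (hvle_v0 ⟨t,ht⟩)⟩, ?_, ?_⟩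
      · intro k
        rw [hq2def]
        simp only
        by_cases h : (k:ℕ) < t+1
        · rw [if_pos h]
          refine ⟨div_nonneg hθpp0.le (hpos k).le, ?_⟩
          rw [div_le_one (hpos k)]
          exact le_trans (min_le_left _ _) (hvt_le k (by omega))
        · rw [if_neg h]
          exact ⟨le_refl 0, zero_le_one⟩
      · have hq2sum : ∑ i, q2 i = θpp * D := by
          rw [hq2def, hDdef, Finset.mul_sum, ← Finset.sum_filter]
          apply Finset.sum_congr rfl
          intro k _
          rw [div_eq_mul_one_div]
        rw [hq2sum]
        calc θpp * D ≤ ((ℓ:ℝ)/D) * D := mul_le_mul_of_nonneg_right (min_le_right _ _) hD0.le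
          _ = (ℓ:ℝ) := div_mul_cancel₀ _ hD0.ne'
    have hΦq2 : Φ (θpp, q2) = θpp := by
      rw [hΦval]
      have hper : ∀ k : Fin n, min (v k * q2 k) θpp = if (k:ℕ) < t+1 then θpp else 0 := by
        intro k
        rw [hq2def]
        simp only
        by_cases h : (k:ℕ) < t+1
        · rw [if_pos h, if_pos h, mul_div_cancel₀ _ (hpos k).ne', min_self]
        · rw [if_neg h, if_neg h, mul_zero]
          exact min_eq_left hθpp0.le
      rw [Finset.sum_congr rfl (fun k _ => hper k), Finset.sum_ite, Finset.sum_const,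
        Finset.sum_const_zero, add_zero, card_filter_lt (t+1) (by omega), nsmul_eq_mul]
      push_cast
      ring
    have hMθpp : θpp ≤ M := by
      rw [← hΦq2]
      exact hKmax _ hq2mem
    have hGcomp : G = s * θ + vs * r := by
      rw [hGdef, hsum_p v, dif_pos hsln]
      congr 1
      have heach : ∀ k ∈ univ.filter (fun k : Fin n => (k:ℕ) < s), v k * c k = θ := by
        intro k hk
        rw [Finset.mem_filter] at hk
        exact hvcE k (by omega)
      rw [Finset.sum_congr rfl heach, Finset.sum_const, card_filter_lt s hsn, nsmul_eq_mul]
    have hMG : M ≤ G - t * θ := le_trans hclamp hclaim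
    have hvs0 : 0 < vs := hpos _
    have hvsr : vs * r < θ := by
      calc vs * r < vs * c ⟨s, hsln⟩ := mul_lt_mul_of_pos_left (hrcs hsln) hvs0
        _ ≤ θ := hvcθ _
    have hstR : (s:ℝ) ≤ (t:ℝ) := by exact_mod_cast hst'
    have hi : G - t*θ < vt := by
      rw [hGcomp]
      linarith [mul_le_mul_of_nonneg_right (sub_nonpos.2 hstR) hθ0, hvsr, hθvt]
    -- second bound
    set A : ℝ := ∑ k ∈ univ.filter (fun k : Fin n => (k:ℕ) < s), 1 / v k with hAdef
    have hA0 : 0 ≤ A := by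
      rw [hAdef]
      exact Finset.sum_nonneg fun k _ => (one_div_pos.2 (hpos k)).le
    have hSA : S s = θ * A := by
      show (∑ k ∈ univ.filter (fun k : Fin n => (k:ℕ) < s), c k) = θ * A
      rw [hAdef, Finset.mul_sum]
      apply Finset.sum_congr rfl
      intro k hk
      rw [Finset.mem_filter] at hk
      rw [hck k (by omega), div_eq_mul_one_div]
    set A1 : ℝ := A + 1 / vs with hA1def
    have hA1pos : 0 < A1 := by
      rw [hA1def]
      have := one_div_pos.2 hvs0
      linarith
    have hr_eq : r = (ℓ:ℝ) - θ * A := by rw [hrdef, hSA]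
    have hcs_eq : c ⟨s, hsln⟩ = θ / vs := hck ⟨s, hsln⟩ (by simpa using hst')
    have hθA1 : (ℓ:ℝ) < θ * A1 := by
      have hrc := hrcs hsln
      rw [hcs_eq, hr_eq] at hrc
      have hexp : θ * A1 = θ*A + θ/vs := by rw [hA1def]; field_simp
      calc (ℓ:ℝ) < θ*A + θ/vs := by linarith
        _ = θ * A1 := hexp.symm
    have hGval : G - t*θ = vs*(ℓ:ℝ) - θ*(vs*A + (t:ℝ) - s) := by
      rw [hGcomp, hr_eq]; ring
    have hC0 : 0 < vs*A + (t:ℝ) - s := by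
      rcases eq_or_lt_of_le hst' with heq | hlt
      · have hs1 : 1 ≤ s := heq ▸ ht1
        have hApos : 0 < A := by
          rw [hAdef]
          apply Finset.sum_pos
          · intro k _; exact one_div_pos.2 (hpos k)
          · exact ⟨⟨0, h0n⟩, by simp; omega⟩
        have hts : (t:ℝ) = (s:ℝ) := by exact_mod_cast heq.symm
        rw [hts]
        have := mul_pos hvs0 hApos
        linarith
      · have h1 : (1:ℝ) ≤ (t:ℝ) - s := by
          have : s + 1 ≤ t := hlt
          push_cast
          have : (s:ℝ) + 1 ≤ (t:ℝ) := by exact_mod_cast this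
          linarith
        linarith [mul_nonneg hvs0.le hA0]
    have hii : G - t*θ < (ℓ:ℝ)/D := by
      rw [hGval]
      have hlA1 : (ℓ:ℝ)/A1 < θ := (div_lt_iff₀ hA1pos).2 (by linarith)
      have hub : vs*(ℓ:ℝ) - θ*(vs*A + (t:ℝ) - s) <
          vs*(ℓ:ℝ) - ((ℓ:ℝ)/A1)*(vs*A + (t:ℝ) - s) :=
        sub_lt_sub_left (mul_lt_mul_of_pos_right hlA1 hC0) _
      refine lt_of_lt_of_le hub ?_
      have hvsA1 : vs * A1 = vs * A + 1 := by
        rw [hA1def, mul_add, mul_one_div, div_self hvs0.ne']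
      have hx : (ℓ:ℝ)/A1 * A1 = (ℓ:ℝ) := div_mul_cancel₀ _ hA1pos.ne'
      have hexp : vs*(ℓ:ℝ) - ((ℓ:ℝ)/A1)*(vs*A + (t:ℝ) - s) =
          ((ℓ:ℝ)/A1)*((1:ℝ) + (s:ℝ) - t) := by
        linear_combination (- vs) * hx + ((ℓ:ℝ)/A1) * hvsA1
      rw [hexp]
      rcases eq_or_lt_of_le hst' with heq | hlt
      · have hA1D : A1 = D := by
          rw [hA1def, hAdef, hDdef]
          have hfeq : (univ.filter (fun k : Fin n => (k:ℕ) < t+1)) =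
              insert (⟨t, ht⟩ : Fin n) (univ.filter (fun k : Fin n => (k:ℕ) < t)) :=
            filter_lt_succ_eq t ht
          rw [hfeq, Finset.sum_insert (by simp)]
          have hsv : (⟨s, hsln⟩ : Fin n) = ⟨t, ht⟩ := by
            apply Fin.ext; simp [heq]
          have h1vs : 1/vs = 1/v ⟨t, ht⟩ := by rw [hvsdef, hsv]
          rw [h1vs, heq]
          ring
        have hts : (s:ℝ) = (t:ℝ) := by exact_mod_cast heq
        rw [hA1D, hts]
        apply le_of_eq
        ring
      · have h1 : (1:ℝ) + (s:ℝ) - t ≤ 0 := by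
          have : s + 1 ≤ t := hlt
          have : (s:ℝ) + 1 ≤ (t:ℝ) := by exact_mod_cast this
          linarith
        have h2 : ((ℓ:ℝ)/A1)*((1:ℝ) + (s:ℝ) - t) ≤ 0 :=
          mul_nonpos_of_nonneg_of_nonpos (div_nonneg hl0.le hA1pos.le) h1
        have h3 : 0 < (ℓ:ℝ)/D := div_pos hl0 hD0
        linarith
    have hfin : G - t*θ < θpp := by
      rw [hθppdef]
      exact lt_min hi hii
    have : θpp < θpp := lt_of_le_of_lt (le_trans hMθpp hMG) hfin
    exact lt_irrefl _ this
  refine ⟨p, hp01, hsum_p_le, ?_, θ, hθ0, s, hst, hsn, ?_, ?_, ?_, ?_⟩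
  · intro q hq hqs
    exact le_trans (key1 q hq hqs) hvalp
  · intro k hk
    have hks : (k:ℕ) < s := by omega
    have hpk : p k = c k := by
      rw [hpdef]; simp only; rw [if_pos hks]
    rw [hpk]
    exact hvcE k hk
  · intro k hk
    rw [hpdef]
    simp only
    rw [if_pos hk]
  · intro h
    have hps : p ⟨s, h⟩ = r := by
      rw [hpdef]; simp
    rw [hps]
    have := hrcs h
    rw [hcdef] at this
    exact this
  · intro k hk
    rw [hpdef]
    simp only
    rw [if_neg (by omega), if_neg (by omega)]
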